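/- arXiv:2308.07641 — 5 statements merged into one kernel-verified Lean document; each statement's English description precedes it below -/
import Mathlib

section
/- For any unit vector $a \in \mathbb{S}^{N-1}$, there exists a ternary vector $t \in \{-1,0,1\}^N$ with $t \neq 0$ such that $\frac{\langle a, t\rangle}{\sqrt{\|t\|_0}} \geq \gamma_N$, where $\|t\|_0$ denotes the number of nonzero entries of $t$ and $\gamma_N = \left(\sum_{k=1}^{N}(\sqrt{k}-\sqrt{k-1})^2\right)^{-1/2}$. -/
/-
Sort the `|a i|` decreasingly into `b 0 ≥ b 1 ≥ ⋯ ≥ b (N - 1) ≥ 0` with partial sums `S k`, and let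
`M = max_k S k / √k`. Since `b k ^ 2 = b k * (S (k + 1) - S k)` and `b` is nonincreasing, summation
by parts turns `S k ≤ M √k` into `1 = ∑ b k ^ 2 ≤ M ∑ b k (√(k + 1) - √k)`, and Cauchy–Schwarz bounds
the last sum by `1 / γ_N`. So `S m ≥ γ_N √m` for the maximizing `m`; the signs of `a` on the `m`
largest coordinates form the ternary vector.
-/

open Finset
open scoped Classical

noncomputable def gamma (N : ℕ) : ℝ :=
  1 / Real.sqrt (∑ k ∈ Finset.range N, (Real.sqrt (k + 1) - Real.sqrt k) ^ 2)

-- Summation by parts: the right side is `b n * e n + ∑ k < n, (b k - b (k + 1)) * e (k + 1)`.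
theorem mul_le_sum_mul_sub {b e : ℕ → ℝ} (hb : Antitone b) (he₀ : e 0 = 0) :
    ∀ {n : ℕ}, (∀ k ≤ n, 0 ≤ e k) → b n * e n ≤ ∑ k ∈ range n, b k * (e (k + 1) - e k)
  | 0, _ => by simp [he₀]
  | n + 1, he => by
    have ih := mul_le_sum_mul_sub hb he₀ fun k hk => he k (hk.trans n.le_succ)
    have hstep : b (n + 1) * e (n + 1) ≤ b n * e (n + 1) :=
      mul_le_mul_of_nonneg_right (hb n.le_succ) (he _ le_rfl)
    rw [sum_range_succ]
    linarith

theorem sum_sq_le_mul_sum_mul_sqrt_sub {b : ℕ → ℝ} {n : ℕ} {M : ℝ} (hb : Antitone b)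
    (hbn : 0 ≤ b n) (hS : ∀ k ≤ n, ∑ j ∈ range k, b j ≤ M * √k) :
    ∑ k ∈ range n, b k ^ 2 ≤ M * ∑ k ∈ range n, b k * (√(k + 1) - √k) := by
  set e : ℕ → ℝ := fun k => M * √k - ∑ j ∈ range k, b j
  have he : ∀ k ≤ n, 0 ≤ e k := fun k hk => sub_nonneg.2 (hS k hk)
  have hparts := mul_le_sum_mul_sub hb (e := e) (by simp [e]) he
  have hterm : ∀ k, b k * (e (k + 1) - e k) = M * (b k * (√(k + 1) - √k)) - b k ^ 2 := by
    intro k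
    simp only [e, sum_range_succ]
    push_cast
    ring
  simp only [hterm, sum_sub_distrib, ← mul_sum] at hparts
  nlinarith [mul_nonneg hbn (he n le_rfl)]

theorem gamma_pos {N : ℕ} (hN : 0 < N) : 0 < gamma N := by
  refine one_div_pos.2 (Real.sqrt_pos.2 (sum_pos' (fun _ _ => sq_nonneg _) ⟨0, ?_⟩))
  simpa using hN

theorem gamma_le_of_partial_sums_le {b : ℕ → ℝ} {N : ℕ} {M : ℝ} (hb : Antitone b)
    (hbN : 0 ≤ b N) (hsq : ∑ k ∈ range N, b k ^ 2 = 1) (hM : 0 ≤ M)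
    (hS : ∀ k ≤ N, ∑ j ∈ range k, b j ≤ M * √k) : gamma N ≤ M := by
  have hCS := Real.sum_mul_le_sqrt_mul_sqrt (range N) b fun k => √(k + 1) - √k
  rw [hsq, Real.sqrt_one, one_mul] at hCS
  have h := (sum_sq_le_mul_sum_mul_sqrt_sub hb hbN hS).trans (mul_le_mul_of_nonneg_left hCS hM)
  exact div_le_of_le_mul₀ (Real.sqrt_nonneg _) hM (hsq ▸ h)

theorem exists_gamma_mul_sqrt_le_sum {b : ℕ → ℝ} {N : ℕ} (hb : Antitone b) (hbN : 0 ≤ b N)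
    (hsq : ∑ k ∈ range N, b k ^ 2 = 1) :
    ∃ m, 0 < m ∧ m ≤ N ∧ gamma N * √m ≤ ∑ j ∈ range m, b j := by
  have hN : 1 ≤ N := Nat.one_le_iff_ne_zero.2 fun h => by simp [h] at hsq
  obtain ⟨m, hm, hmax⟩ := exists_max_image (Icc 1 N) (fun k => (∑ j ∈ range k, b j) / √k)
    (nonempty_Icc.2 hN)
  rw [mem_Icc] at hm
  have hSnonneg : 0 ≤ ∑ j ∈ range m, b j :=
    sum_nonneg fun j hj => hbN.trans (hb ((mem_range.1 hj).le.trans hm.2))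
  refine ⟨m, hm.1, hm.2, (le_div_iff₀ (Real.sqrt_pos.2 (Nat.cast_pos.2 hm.1))).1 ?_⟩
  refine gamma_le_of_partial_sums_le hb hbN hsq (by positivity) fun k hk => ?_
  rcases k.eq_zero_or_pos with rfl | hk₀
  · simp
  · exact (div_le_iff₀ (by positivity)).1 (hmax k (mem_Icc.2 ⟨hk₀, hk⟩))

section SortedAbs

variable {N : ℕ} (a : Fin N → ℝ)

-- `Tuple.sort` sorts increasingly, so sorting `-|a i|` lists the `|a i|` in decreasing order.
noncomputable def sortedAbs (k : ℕ) : ℝ :=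
  if h : k < N then |a (Tuple.sort (fun i => -|a i|) ⟨k, h⟩)| else 0

theorem sortedAbs_coe (i : Fin N) : sortedAbs a i = |a (Tuple.sort (fun i => -|a i|) i)| :=
  dif_pos i.isLt

theorem sortedAbs_of_le {k : ℕ} (hk : N ≤ k) : sortedAbs a k = 0 :=
  dif_neg hk.not_gt

theorem sortedAbs_nonneg (k : ℕ) : 0 ≤ sortedAbs a k := by
  unfold sortedAbs
  split_ifs
  exacts [abs_nonneg _, le_rfl]

theorem antitone_sortedAbs : Antitone (sortedAbs a) := by
  intro i j hij
  by_cases hj : j < N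
  · have hsort := Tuple.monotone_sort (fun i => -|a i|)
      (show (⟨i, hij.trans_lt hj⟩ : Fin N) ≤ ⟨j, hj⟩ from hij)
    simpa [sortedAbs, hj, hij.trans_lt hj] using hsort
  · rw [sortedAbs_of_le a (not_lt.1 hj)]
    exact sortedAbs_nonneg a i

theorem sum_range_sortedAbs_sq : ∑ k ∈ range N, sortedAbs a k ^ 2 = ∑ i, a i ^ 2 := by
  rw [← Fin.sum_univ_eq_sum_range (fun k => sortedAbs a k ^ 2)]
  simp only [sortedAbs_coe, sq_abs]
  exact Equiv.sum_comp _ fun i => a i ^ 2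

theorem exists_card_eq_sum_abs_eq_sum_sortedAbs {m : ℕ} (hm : m ≤ N) :
    ∃ T : Finset (Fin N), #T = m ∧ ∑ i ∈ T, |a i| = ∑ k ∈ range m, sortedAbs a k := by
  refine ⟨univ.map ((Fin.castLEEmb hm).trans (Tuple.sort fun i => -|a i|).toEmbedding),
    by simp, ?_⟩
  rw [sum_map, ← Fin.sum_univ_eq_sum_range]
  refine sum_congr rfl fun i _ => ?_
  rw [← Fin.val_castLE hm i, sortedAbs_coe]
  rfl

end SortedAbs

section SignOn

variable {ι : Type*} (T : Finset ι) (a : ι → ℝ)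

noncomputable def signOn (i : ι) : ℝ :=
  if i ∈ T then (SignType.sign (a i) : ℝ) else 0

theorem signOn_ternary (i : ι) : signOn T a i = -1 ∨ signOn T a i = 0 ∨ signOn T a i = 1 := by
  unfold signOn
  split_ifs
  · rcases SignType.sign (a i) with _ | _ | _ <;> simp
  · simp

theorem sum_mul_signOn [Fintype ι] : ∑ i, a i * signOn T a i = ∑ i ∈ T, |a i| := by
  simp [signOn, mul_ite, self_mul_sign]

theorem card_support_signOn_le [Fintype ι] : #{i | signOn T a i ≠ 0} ≤ #T :=
  card_le_card fun i hi => by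
    by_contra hiT
    simp [signOn, hiT] at hi

end SignOn

theorem ternary_exists_general (N : ℕ) (a : Fin N → ℝ)
    (ha : ∑ i, a i ^ 2 = 1) :
    ∃ t : Fin N → ℝ, (∀ i, t i = -1 ∨ t i = 0 ∨ t i = 1) ∧ t ≠ 0 ∧
      gamma N ≤ (∑ i, a i * t i) /
        Real.sqrt ((Finset.univ.filter fun i => t i ≠ 0).card) := by
  obtain ⟨m, hm₀, hmN, hγm⟩ := exists_gamma_mul_sqrt_le_sum (antitone_sortedAbs a)
    (sortedAbs_nonneg a N) ((sum_range_sortedAbs_sq a).trans ha)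
  obtain ⟨T, hT, hsum⟩ := exists_card_eq_sum_abs_eq_sum_sortedAbs a hmN
  have hsqrt_m : 0 < √(m : ℝ) := by positivity
  have hval : ∑ i, a i * signOn T a i = ∑ k ∈ range m, sortedAbs a k := by
    rw [sum_mul_signOn, hsum]
  have hpos : 0 < ∑ i, a i * signOn T a i :=
    hval ▸ (mul_pos (gamma_pos (hm₀.trans_le hmN)) hsqrt_m).trans_le hγm
  have hne : signOn T a ≠ 0 := fun h => by simp [h] at hpos
  obtain ⟨i, hi⟩ := Function.ne_iff.1 hne
  have hcard : 0 < √(#{i | signOn T a i ≠ 0} : ℝ) :=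
    Real.sqrt_pos.2 (Nat.cast_pos.2 (card_pos.2 ⟨i, mem_filter.2 ⟨mem_univ i, hi⟩⟩))
  refine ⟨signOn T a, signOn_ternary T a, hne, ?_⟩
  calc gamma N ≤ (∑ i, a i * signOn T a i) / √m := by
        rw [le_div_iff₀ hsqrt_m, hval]
        exact hγm
    _ ≤ _ := div_le_div_of_nonneg_left hpos.le hcard
        (Real.sqrt_le_sqrt (Nat.cast_le.2 (hT ▸ card_support_signOn_le T a)))

theorem ternary_exists (N : ℕ) (hN : 1 ≤ N) (a : Fin N → ℝ)
    (ha : ∑ i, a i ^ 2 = 1) :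
    ∃ t : Fin N → ℝ, (∀ i, t i = -1 ∨ t i = 0 ∨ t i = 1) ∧ t ≠ 0 ∧
      gamma N ≤ (∑ i, a i * t i) /
        Real.sqrt ((Finset.univ.filter fun i => t i ≠ 0).card) :=
  ternary_exists_general N a ha
end

section
/- Let $a \in \mathbb{R}_+^N$ with $a[0] \geq a[1] \geq \dots \geq a[N-1] \geq 0$ and $\|a\|_2 = 1$. Then $\max_{1 \leq k \leq N} \frac{\sum_{i=0}^{k-1} a[i]}{\sqrt{k}} \geq \gamma_N$, where $\gamma_N = \left(\sum_{k=1}^{N}(\sqrt{k}-\sqrt{k-1})^2\right)^{-1/2}$. -/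
/-!
Let `S k = ∑_{i<k} a i` and let `M` be the maximum of `S k / √k`. Since `√k` telescopes as
`∑_{i<k} (√(i+1) - √i)`, the bounds `S k ≤ M √k` compare the partial sums of `a` with those of
`M (√(i+1) - √i)`; summation by parts against the nonnegative nonincreasing weights `a i` turns
this into `1 = ∑ a i ^ 2 ≤ M ∑ a i (√(i+1) - √i)`, and Cauchy–Schwarz bounds the last sum
by `1 / γ_N`.
-/

open Finset

theorem Finset.sum_mul_le_sum_mul_of_antitoneOn_of_sum_range_le {R : Type*} [CommRing R]
    [PartialOrder R] [IsOrderedRing R] {N : ℕ} {a b c : ℕ → R}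
    (ha : AntitoneOn a (Set.Iio N)) (ha₀ : ∀ i < N, 0 ≤ a i)
    (hbc : ∀ k ≤ N, ∑ i ∈ range k, b i ≤ ∑ i ∈ range k, c i) :
    ∑ i ∈ range N, a i * b i ≤ ∑ i ∈ range N, a i * c i := by
  rcases Nat.eq_zero_or_pos N with rfl | hN
  · simp
  have hD : ∀ k ≤ N, 0 ≤ ∑ i ∈ range k, (c - b) i := fun k hk => by
    simpa [sum_sub_distrib] using hbc k hk
  rw [← sub_nonneg, ← sum_sub_distrib]
  simp_rw [← mul_sub]
  have hparts := sum_range_by_parts a (c - b) N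
  simp only [smul_eq_mul, Pi.sub_apply] at hparts
  rw [hparts, sub_nonneg]
  calc ∑ i ∈ range (N - 1), (a (i + 1) - a i) * ∑ j ∈ range (i + 1), (c j - b j)
      ≤ 0 := by
        refine sum_nonpos fun i hi => mul_nonpos_of_nonpos_of_nonneg ?_ (hD _ ?_)
        · have := mem_range.mp hi
          exact sub_nonpos.mpr (ha (by simp; omega) (by simp; omega) (by omega))
        · have := mem_range.mp hi; omega
    _ ≤ a (N - 1) * ∑ j ∈ range N, (c j - b j) :=
        mul_nonneg (ha₀ _ (by omega)) (hD N le_rfl)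

theorem sum_range_sqrt_succ_sub_sqrt (n : ℕ) :
    ∑ i ∈ range n, (Real.sqrt (i + 1) - Real.sqrt i) = Real.sqrt n := by
  simpa using sum_range_sub (fun i : ℕ => Real.sqrt i) n

theorem one_le_mul_sum_mul_sqrt_succ_sub_sqrt {N : ℕ} {a : ℕ → ℝ} {M : ℝ}
    (ha : AntitoneOn a (Set.Iio N)) (ha₀ : ∀ i < N, 0 ≤ a i)
    (hnorm : ∑ i ∈ range N, a i ^ 2 = 1)
    (hM : ∀ j ∈ Icc 1 N, (∑ i ∈ range j, a i) / Real.sqrt j ≤ M) :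
    1 ≤ M * ∑ i ∈ range N, a i * (Real.sqrt (i + 1) - Real.sqrt i) := by
  have hpartial : ∀ j ≤ N, ∑ i ∈ range j, a i ≤
      ∑ i ∈ range j, M * (Real.sqrt (i + 1) - Real.sqrt i) := by
    intro j hj
    rcases Nat.eq_zero_or_pos j with rfl | hj₀
    · simp
    rw [← mul_sum, sum_range_sqrt_succ_sub_sqrt, ← div_le_iff₀ (by positivity)]
    exact hM j (mem_Icc.mpr ⟨hj₀, hj⟩)
  have := sum_mul_le_sum_mul_of_antitoneOn_of_sum_range_le ha ha₀ hpartial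
  simp only [← sq, hnorm] at this
  simpa [mul_sum, mul_left_comm] using this

theorem sum_mul_sqrt_succ_sub_sqrt_le_inv_gamma {N : ℕ} {a : ℕ → ℝ}
    (hnorm : ∑ i ∈ range N, a i ^ 2 = 1) :
    ∑ i ∈ range N, a i * (Real.sqrt (i + 1) - Real.sqrt i) ≤ (gamma N)⁻¹ := by
  simpa [gamma, hnorm] using Real.sum_mul_le_sqrt_mul_sqrt (range N) a
    (fun i : ℕ => Real.sqrt (i + 1) - Real.sqrt i)

theorem sorted_minimax_lower_bound (N : ℕ) (hN : 1 ≤ N) (a : ℕ → ℝ)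
    (hmono : ∀ i j, i ≤ j → j < N → a j ≤ a i)
    (hnonneg : ∀ i, i < N → 0 ≤ a i)
    (hnorm : ∑ i ∈ Finset.range N, a i ^ 2 = 1) :
    ∃ k, 1 ≤ k ∧ k ≤ N ∧
      gamma N ≤ (∑ i ∈ Finset.range k, a i) / Real.sqrt k := by
  obtain ⟨k, hk, hmax⟩ := exists_max_image (Icc 1 N)
    (fun k : ℕ => (∑ i ∈ range k, a i) / Real.sqrt k) ⟨1, by simp [hN]⟩
  obtain ⟨hk₁, hkN⟩ := mem_Icc.mp hk
  refine ⟨k, hk₁, hkN, ?_⟩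
  set M := (∑ i ∈ range k, a i) / Real.sqrt k
  set T := ∑ i ∈ range N, a i * (Real.sqrt (i + 1) - Real.sqrt i)
  have hanti : AntitoneOn a (Set.Iio N) := fun i _ j hj hij => hmono i j hij hj
  have hMT : 1 ≤ M * T := one_le_mul_sum_mul_sqrt_succ_sub_sqrt hanti hnonneg hnorm hmax
  have hT₀ : 0 ≤ T := sum_nonneg fun i hi => mul_nonneg (hnonneg i (mem_range.mp hi))
    (sub_nonneg.mpr (Real.sqrt_le_sqrt (by linarith)))
  have hM : 0 < M := pos_of_mul_pos_left (one_pos.trans_le hMT) hT₀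
  have hMγ : 1 ≤ M * (gamma N)⁻¹ :=
    hMT.trans (mul_le_mul_of_nonneg_left (sum_mul_sqrt_succ_sub_sqrt_le_inv_gamma hnorm) hM.le)
  have hγ : 0 < gamma N := by
    by_contra! h
    linarith [mul_nonpos_of_nonneg_of_nonpos hM.le (inv_nonpos.mpr h)]
  rwa [← div_eq_mul_inv, one_le_div₀ hγ] at hMγ
end

section
/- Let $U \in \mathbb{R}^{M \times K}$, $V \in \mathbb{R}^{K \times N}$, $W \in \mathbb{R}^{M\times N}$. Then $S^* = [(U^\top U) \odot (VV^\top)]^{\dagger} \operatorname{diag}(U^\top W V^\top)$ minimizes $\|W - U\operatorname{diag}(S)V\|_F$ over $S \in \mathbb{R}^K$, where $(\cdot)^\dagger$ denotes the Moore–Penrose pseudo-inverse. -/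
open Matrix Finset

/-! The map `S ↦ U diag(S) V` is, after vectorizing matrices, multiplication by the Khatri–Rao
product `A` of `Vᵀ` and `U`, whose Gram matrix `AᵀA` is `(UᵀU) ⊙ (VVᵀ)` and for which
`Aᵀ vec W = diag(UᵀWVᵀ)`. So `S*` is `(AᵀA)⁺ Aᵀ vec W`. From `AᵀA P AᵀA = AᵀA` the defect
`C = AᵀA P Aᵀ - Aᵀ` satisfies `C A = 0`, hence `C Cᵀ = 0` and `C = 0`: `S*` solves the normal
equations, the residual is orthogonal to the range of `A`, and Pythagoras gives minimality. -/

namespace Matrix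

variable {R k m n : Type*}

section KhatriRao

variable [CommSemiring R]

def khatriRao (A : Matrix m k R) (B : Matrix n k R) : Matrix (m × n) k R :=
  of fun p l => A p.1 l * B p.2 l

theorem khatriRao_mulVec [Fintype k] [DecidableEq k] (A : Matrix m k R) (B : Matrix n k R)
    (s : k → R) : khatriRao A B *ᵥ s = vec (B * diagonal s * Aᵀ) := by
  ext ⟨i, j⟩
  simp only [khatriRao, mulVec, dotProduct, of_apply, vec]
  rw [mul_apply]
  simp only [mul_diagonal, transpose_apply]
  exact Finset.sum_congr rfl fun l _ => by ring

variable [Fintype m] [Fintype n]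

theorem transpose_khatriRao_mul_khatriRao (A : Matrix m k R) (B : Matrix n k R) :
    (khatriRao A B)ᵀ * khatriRao A B = (Aᵀ * A) ⊙ (Bᵀ * B) := by
  ext l l'
  simp only [khatriRao, mul_apply, transpose_apply, of_apply, hadamard_apply,
    Fintype.sum_prod_type, Finset.sum_mul_sum]
  exact Finset.sum_congr rfl fun i _ => Finset.sum_congr rfl fun j _ => by ring

theorem transpose_khatriRao_mulVec_vec (A : Matrix m k R) (B : Matrix n k R) (X : Matrix n m R) :
    (khatriRao A B)ᵀ *ᵥ vec X = diag (Bᵀ * X * A) := by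
  ext l
  simp only [khatriRao, mulVec, dotProduct, transpose_apply, of_apply, vec, diag_apply, mul_apply,
    Fintype.sum_prod_type, Finset.sum_mul]
  exact Finset.sum_congr rfl fun i _ => Finset.sum_congr rfl fun j _ => by ring

theorem sum_sum_sq_eq_vec_dotProduct_vec (X : Matrix m n R) :
    ∑ i, ∑ j, X i j ^ 2 = vec X ⬝ᵥ vec X := by
  simp only [dotProduct, vec, Fintype.sum_prod_type, sq]
  exact Finset.sum_comm

end KhatriRao

variable [Fintype k] [Fintype m]

theorem conjTranspose_mul_self_mul_mul_conjTranspose [Ring R] [PartialOrder R] [StarRing R]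
    [StarOrderedRing R] [NoZeroDivisors R] {A : Matrix m k R} {P : Matrix k k R}
    (hP : Aᴴ * A * P * (Aᴴ * A) = Aᴴ * A) : Aᴴ * A * P * Aᴴ = Aᴴ := by
  set C := Aᴴ * A * P * Aᴴ - Aᴴ
  have hCA : C * A = 0 := by
    simp only [C, Matrix.sub_mul, Matrix.mul_assoc] at hP ⊢
    rw [hP, sub_self]
  have hCstar : Cᴴ = A * Pᴴ * (Aᴴ * A) - A := by
    simp only [C, conjTranspose_sub, conjTranspose_mul, conjTranspose_conjTranspose,
      Matrix.mul_assoc]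
  have hCCstar : C * Cᴴ = 0 := by
    simp only [hCstar, Matrix.mul_sub, ← Matrix.mul_assoc, hCA, Matrix.zero_mul, sub_zero]
  exact sub_eq_zero.mp (self_mul_conjTranspose_eq_zero.mp hCCstar)

theorem residual_le_of_conjTranspose_mulVec_residual_eq_zero [CommRing R] [PartialOrder R]
    [StarRing R] [StarOrderedRing R] {A : Matrix m k R} {w : m → R} {x : k → R}
    (hx : Aᴴ *ᵥ (w - A *ᵥ x) = 0) (s : k → R) :
    star (w - A *ᵥ x) ⬝ᵥ (w - A *ᵥ x) ≤ star (w - A *ᵥ s) ⬝ᵥ (w - A *ᵥ s) := by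
  set r := w - A *ᵥ x
  set d := A *ᵥ (x - s)
  have hsplit : w - A *ᵥ s = r + d := by
    simp only [r, d, mulVec_sub]
    abel
  have hrd : star r ⬝ᵥ d = 0 := by
    have hr := congrArg star hx
    rw [star_mulVec, conjTranspose_conjTranspose, star_zero] at hr
    rw [dotProduct_mulVec, hr, zero_dotProduct]
  have hdr : star d ⬝ᵥ r = 0 := by
    rw [star_mulVec, ← dotProduct_mulVec, hx, dotProduct_zero]
  rw [hsplit, star_add, add_dotProduct, dotProduct_add, dotProduct_add, hrd, hdr, add_zero,
    zero_add]
  exact le_add_of_nonneg_right (dotProduct_star_self_nonneg d)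

end Matrix

theorem tsvd_least_squares_solution_general (M N K : ℕ)
    (U : Matrix (Fin M) (Fin K) ℝ) (V : Matrix (Fin K) (Fin N) ℝ)
    (W : Matrix (Fin M) (Fin N) ℝ)
    (P : Matrix (Fin K) (Fin K) ℝ)
    (hP1 : Matrix.hadamard (Uᵀ * U) (V * Vᵀ) * P * Matrix.hadamard (Uᵀ * U) (V * Vᵀ) =
      Matrix.hadamard (Uᵀ * U) (V * Vᵀ)) :
    ∀ S : Fin K → ℝ,
      (∑ i, ∑ j,
        (W - U * Matrix.diagonal (P.mulVec fun k => (Uᵀ * W * Vᵀ) k k) * V) i j ^ 2) ≤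
      ∑ i, ∑ j, (W - U * Matrix.diagonal S * V) i j ^ 2 := by
  intro S
  set A := khatriRao Vᵀ U
  have hGram : Aᴴ * A = (Uᵀ * U) ⊙ (V * Vᵀ) := by
    rw [conjTranspose_eq_transpose_of_trivial, transpose_khatriRao_mul_khatriRao,
      transpose_transpose, hadamard_comm]
  have hresidual (s : Fin K → ℝ) : vec (W - U * diagonal s * V) = vec W - A *ᵥ s := by
    rw [vec_sub, khatriRao_mulVec, transpose_transpose]
  have htarget : (fun k => (Uᵀ * W * Vᵀ) k k) = Aᴴ *ᵥ vec W := by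
    rw [conjTranspose_eq_transpose_of_trivial, transpose_khatriRao_mulVec_vec]
    rfl
  have hnormal : Aᴴ *ᵥ (vec W - A *ᵥ (P *ᵥ (Aᴴ *ᵥ vec W))) = 0 := by
    rw [← hGram] at hP1
    rw [mulVec_sub, mulVec_mulVec, mulVec_mulVec, mulVec_mulVec,
      conjTranspose_mul_self_mul_mul_conjTranspose hP1, sub_self]
  simpa only [sum_sum_sq_eq_vec_dotProduct_vec, hresidual, htarget, star_trivial]
    using residual_le_of_conjTranspose_mulVec_residual_eq_zero hnormal S

/-- `S* = [(UᵀU) ⊙ (VVᵀ)]⁺ diag(Uᵀ W Vᵀ)` minimizes `‖W - U diag(S) V‖_F`,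
where the Moore–Penrose pseudo-inverse `P` of the Gram matrix is characterized
by the four Penrose conditions. -/
theorem tsvd_least_squares_solution (M N K : ℕ)
    (U : Matrix (Fin M) (Fin K) ℝ) (V : Matrix (Fin K) (Fin N) ℝ)
    (W : Matrix (Fin M) (Fin N) ℝ)
    (P : Matrix (Fin K) (Fin K) ℝ)
    (hP1 : Matrix.hadamard (Uᵀ * U) (V * Vᵀ) * P * Matrix.hadamard (Uᵀ * U) (V * Vᵀ) =
      Matrix.hadamard (Uᵀ * U) (V * Vᵀ))
    (hP2 : P * Matrix.hadamard (Uᵀ * U) (V * Vᵀ) * P = P)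
    (hP3 : (Matrix.hadamard (Uᵀ * U) (V * Vᵀ) * P)ᵀ =
      Matrix.hadamard (Uᵀ * U) (V * Vᵀ) * P)
    (hP4 : (P * Matrix.hadamard (Uᵀ * U) (V * Vᵀ))ᵀ =
      P * Matrix.hadamard (Uᵀ * U) (V * Vᵀ)) :
    ∀ S : Fin K → ℝ,
      (∑ i, ∑ j,
        (W - U * Matrix.diagonal (P.mulVec fun k => (Uᵀ * W * Vᵀ) k k) * V) i j ^ 2) ≤
      ∑ i, ∑ j, (W - U * Matrix.diagonal S * V) i j ^ 2 :=
  tsvd_least_squares_solution_general M N K U V W P hP1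
end

section
/- Let $Q$ be the $N\times N$ upper bidiagonal matrix with $1$ on the diagonal and $-1$ on the superdiagonal, and $v = (\sqrt{1},\dots,\sqrt{N})^\top$. Define $f(a) = \|a\|_2 - v^\top Q a$ on $\mathbb{R}^N$. Then $f$ is convex, and $f(a) \leq 0$ for every $a$ in the convex cone $\{a : Qa \geq 0\}$ (entrywise). -/
open Matrix Finset

/-!
The first term of `f` is the Euclidean norm and the second is linear, so `f` is convex.
On the cone, `b = Q a ≥ 0`, and since `Q` is inverted by taking partial sums from the right,
`a = ∑ⱼ bⱼ 𝟙_{[0, j]}`. The triangle inequality then gives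
`‖a‖₂ ≤ ∑ⱼ bⱼ ‖𝟙_{[0, j]}‖₂ = ∑ⱼ √(j + 1) bⱼ = vᵀ Q a`.
-/

section EuclideanNorm

variable {ι : Type*} [Fintype ι]

lemma sqrt_sum_sq_eq_norm_toLp (a : ι → ℝ) : √(∑ i, a i ^ 2) = ‖WithLp.toLp 2 a‖ := by
  simp [EuclideanSpace.norm_eq]

lemma convexOn_univ_sqrt_sum_sq :
    ConvexOn ℝ Set.univ (fun a : ι → ℝ => √(∑ i, a i ^ 2)) := by
  simp_rw [sqrt_sum_sq_eq_norm_toLp]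
  exact (convexOn_univ_norm (E := EuclideanSpace ℝ ι)).comp_linearMap
    (WithLp.linearEquiv 2 ℝ (ι → ℝ)).symm.toLinearMap

lemma sqrt_sum_sq_sum_le {κ : Type*} (s : Finset κ) (v : κ → ι → ℝ) :
    √(∑ i, (∑ j ∈ s, v j i) ^ 2) ≤ ∑ j ∈ s, √(∑ i, v j i ^ 2) := by
  simp_rw [sqrt_sum_sq_eq_norm_toLp, ← Finset.sum_apply, WithLp.toLp_sum]
  exact norm_sum_le _ _

end EuclideanNorm

lemma sqrt_sum_sq_ite_le_eq_mul {N : ℕ} (j : Fin N) {c : ℝ} (hc : 0 ≤ c) :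
    √(∑ i : Fin N, (if i ≤ j then c else 0) ^ 2) = √((j : ℕ) + 1) * c := by
  have hsum : ∑ i : Fin N, (if i ≤ j then c else 0) ^ 2 = ((j : ℕ) + 1) * c ^ 2 := by
    simp [ite_pow, Finset.sum_ite, filter_ge_eq_Iic, Fin.card_Iic]
  rw [hsum, Real.sqrt_mul (by positivity), Real.sqrt_sq hc]

lemma Function.extend_val_apply_of_le {M : Type*} [Zero M] {N : ℕ} (a : Fin N → M) {n : ℕ}
    (hn : N ≤ n) : Function.extend Fin.val a 0 n = 0 :=
  Function.extend_apply' _ _ n fun ⟨j, hj⟩ => by omega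

section Bidiagonal

variable {N : ℕ} {Q : Matrix (Fin N) (Fin N) ℝ}
  (hQ : ∀ i j : Fin N, Q i j =
    if (j : ℕ) = (i : ℕ) then 1 else if (j : ℕ) = (i : ℕ) + 1 then -1 else 0)
include hQ

/-- Extending `a` by zero past `N` makes the formula uniform, including the last row of `Q`. -/
lemma mulVec_apply_eq_sub_of_bidiagonal (a : Fin N → ℝ) (i : Fin N) :
    (Q *ᵥ a) i = Function.extend Fin.val a 0 i - Function.extend Fin.val a 0 (i + 1) := by
  set A := Function.extend Fin.val a 0
  have hA : ∀ j : Fin N, A j = a j := Fin.val_injective.extend_apply a 0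
  have hA_ge : ∀ n, N ≤ n → A n = 0 := fun _ => Function.extend_val_apply_of_le a
  have hterm : ∀ j : Fin N, Q i j * a j =
      (if (j : ℕ) = i then A j else 0) - (if (j : ℕ) = i + 1 then A j else 0) := by
    intro j
    rw [hQ, hA]
    split_ifs <;> first | omega | ring
  simp only [mulVec, dotProduct, hterm]
  rw [Fin.sum_univ_eq_sum_range
      (fun n => (if n = i then A n else 0) - (if n = i + 1 then A n else 0)),
    sum_sub_distrib, sum_ite_eq', sum_ite_eq', if_pos (mem_range.2 i.isLt)]
  by_cases h : (i : ℕ) + 1 < N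
  · rw [if_pos (mem_range.2 h)]
  · rw [if_neg (by simpa using h), hA_ge (i + 1) (by omega)]

lemma eq_sum_ite_le_mulVec_of_bidiagonal (a : Fin N → ℝ) (i : Fin N) :
    a i = ∑ j, if i ≤ j then (Q *ᵥ a) j else 0 := by
  set A := Function.extend Fin.val a 0
  have hA_i : A i = a i := Fin.val_injective.extend_apply a 0 i
  have hA_N : A N = 0 := Function.extend_val_apply_of_le a le_rfl
  simp only [mulVec_apply_eq_sub_of_bidiagonal hQ, Fin.le_iff_val_le_val]
  rw [Fin.sum_univ_eq_sum_range (fun n => if (i : ℕ) ≤ n then A n - A (n + 1) else 0),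
    ← sum_filter, range_eq_Ico, Ico_filter_le_of_left_le (Nat.zero_le i)]
  calc a i = -(A N - A i) := by rw [hA_N, hA_i, zero_sub, neg_neg]
    _ = ∑ n ∈ Ico (i : ℕ) N, (A n - A (n + 1)) := by
      rw [← sum_Ico_sub A i.isLt.le, ← sum_neg_distrib]
      simp only [neg_sub]

end Bidiagonal

/-- `f(a) = ‖a‖₂ - vᵀ Q a` is convex and nonpositive on the cone `{a : Qa ≥ 0}`. -/
theorem f_convex_and_nonpos_on_cone (N : ℕ)
    (Q : Matrix (Fin N) (Fin N) ℝ)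
    (hQ : ∀ i j : Fin N, Q i j =
      if (j : ℕ) = (i : ℕ) then 1 else if (j : ℕ) = (i : ℕ) + 1 then -1 else 0) :
    ConvexOn ℝ Set.univ (fun a : Fin N → ℝ =>
      Real.sqrt (∑ i, a i ^ 2) -
        ∑ i : Fin N, Real.sqrt ((i : ℕ) + 1) * Q.mulVec a i) ∧
    (∀ a : Fin N → ℝ, (∀ i, 0 ≤ Q.mulVec a i) →
      Real.sqrt (∑ i, a i ^ 2) -
        ∑ i : Fin N, Real.sqrt ((i : ℕ) + 1) * Q.mulVec a i ≤ 0) := by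
  refine ⟨convexOn_univ_sqrt_sum_sq.sub
    (((dotProductBilin ℝ ℝ fun i : Fin N => √((i : ℕ) + 1)).comp Q.mulVecLin).concaveOn
      convex_univ), fun a ha => sub_nonpos.2 ?_⟩
  calc √(∑ i, a i ^ 2) = √(∑ i, (∑ j, if i ≤ j then (Q *ᵥ a) j else 0) ^ 2) := by
        simp only [← eq_sum_ite_le_mulVec_of_bidiagonal hQ]
    _ ≤ ∑ j, √(∑ i, (if i ≤ j then (Q *ᵥ a) j else 0) ^ 2) := sqrt_sum_sq_sum_le _ _
    _ = ∑ j : Fin N, √((j : ℕ) + 1) * (Q *ᵥ a) j :=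
        sum_congr rfl fun j _ => sqrt_sum_sq_ite_le_eq_mul j (ha j)
end

section
/- Let $x \in \mathbb{R}^N$ have coordinates sorted so that $|x[0]| \geq |x[1]| \geq \dots \geq |x[N-1]|$, with $\|x\|_2 = 1$. For each $q \in \{1,\dots,N\}$, let $t_q$ be the ternary vector with $t_q[i] = \mathrm{sign}(x[i])$ for $i < q$ and $t_q[i] = 0$ otherwise. Then the cosine between $x$ and $t_q$ equals $\frac{\sum_{i=0}^{q-1}|x[i]|}{\sqrt{q}}$, and $\max_{1\leq q\leq N} \frac{\sum_{i=0}^{q-1}|x[i]|}{\sqrt{q}} \geq \gamma_N$ where $\gamma_N = \left(\sum_{k=1}^{N}(\sqrt{k}-\sqrt{k-1})^2\right)^{-1/2}$. -/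
/-! Write `a k = |x k|`, `S q = ∑_{k<q} a k` and `c = max_q S q / √q`, so that `S q ≤ c √q`.
Because the weights `a k` decrease, Abel summation turns this into
`∑ a k ^ 2 = ∑ a k (S (k+1) - S k) ≤ c ∑ a k (√(k+1) - √k)`, and by Cauchy–Schwarz the right side
is at most `c (∑ (√(k+1) - √k) ^ 2) ^ (1/2) = c / γ_N`. -/

open Finset
open scoped Classical

lemma sum_range_mul_sub_le_of_antitone {a f g : ℕ → ℝ} {N : ℕ} (ha : Antitone a)
    (ha0 : ∀ k, 0 ≤ a k) (h0 : f 0 = g 0) (hfg : ∀ n ≤ N, f n ≤ g n) :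
    ∑ k ∈ range N, a k * (f (k + 1) - f k) ≤ ∑ k ∈ range N, a k * (g (k + 1) - g k) := by
  set D : ℕ → ℝ := fun n => f n - g n
  have hD : ∀ n ≤ N, D n ≤ 0 := fun n hn => sub_nonpos.2 (hfg n hn)
  have hpartial : ∀ n, ∑ k ∈ range n, (D (k + 1) - D k) = D n := fun n => by
    rw [sum_range_sub, sub_eq_self]
    exact sub_eq_zero.2 h0
  rw [← sub_nonpos, ← sum_sub_distrib]
  calc ∑ k ∈ range N, (a k * (f (k + 1) - f k) - a k * (g (k + 1) - g k))
      = ∑ k ∈ range N, a k • (D (k + 1) - D k) := by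
        refine sum_congr rfl fun k _ => ?_
        simp only [D, smul_eq_mul]
        ring
    _ = a (N - 1) * D N - ∑ k ∈ range (N - 1), (a (k + 1) - a k) * D (k + 1) := by
        rw [sum_range_by_parts]
        simp only [hpartial, smul_eq_mul]
    _ ≤ 0 := by
        have hlast : a (N - 1) * D N ≤ 0 :=
          mul_nonpos_of_nonneg_of_nonpos (ha0 _) (hD N le_rfl)
        have hsteps : 0 ≤ ∑ k ∈ range (N - 1), (a (k + 1) - a k) * D (k + 1) :=
          sum_nonneg fun k hk => mul_nonneg_of_nonpos_of_nonpos
            (sub_nonpos.2 (ha k.le_succ)) (hD _ (by grind))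
        linarith

theorem gamma_le_of_sum_range_le {a : ℕ → ℝ} {N : ℕ} (ha : Antitone a) (ha0 : ∀ k, 0 ≤ a k)
    (hnorm : ∑ k ∈ range N, a k ^ 2 = 1) {c : ℝ}
    (hc : ∀ q ≤ N, ∑ k ∈ range q, a k ≤ c * √q) : gamma N ≤ c := by
  set b : ℕ → ℝ := fun k => √(k + 1) - √k
  have hb0 : ∀ k, 0 ≤ b k := fun k =>
    sub_nonneg.2 (Real.sqrt_le_sqrt (by linarith))
  have habel : 1 ≤ c * ∑ k ∈ range N, a k * b k := by
    have := sum_range_mul_sub_le_of_antitone (f := fun q => ∑ k ∈ range q, a k)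
      (g := fun q => c * √q) ha ha0 (by simp) hc
    rw [← hnorm]
    simpa [sum_range_succ, mul_sum, b, mul_sub, sq, mul_left_comm] using this
  have hcs : ∑ k ∈ range N, a k * b k ≤ √(∑ k ∈ range N, b k ^ 2) := by
    simpa [hnorm] using Real.sum_mul_le_sqrt_mul_sqrt (range N) a b
  have hab0 : 0 ≤ ∑ k ∈ range N, a k * b k := sum_nonneg fun k _ => mul_nonneg (ha0 k) (hb0 k)
  have hc0 : 0 < c := pos_of_mul_pos_left (one_pos.trans_le habel) hab0
  have h1 : 1 ≤ c * √(∑ k ∈ range N, b k ^ 2) :=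
    habel.trans (mul_le_mul_of_nonneg_left hcs hc0.le)
  have hpos : 0 < √(∑ k ∈ range N, b k ^ 2) := pos_of_mul_pos_right (one_pos.trans_le h1) hc0.le
  rw [gamma, div_le_iff₀ hpos]
  exact h1

section Ternary

variable {N : ℕ} (x : Fin N → ℝ)

noncomputable def topTernary (q : ℕ) (i : Fin N) : ℝ :=
  if (i : ℕ) < q then (if 0 ≤ x i then 1 else -1) else 0

lemma sum_mul_topTernary (q : ℕ) :
    ∑ i, x i * topTernary x q i = ∑ i : Fin N, if (i : ℕ) < q then |x i| else 0 := by
  refine sum_congr rfl fun i _ => ?_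
  unfold topTernary
  split_ifs with hq hx
  · simp [abs_of_nonneg hx]
  · simp [abs_of_neg (not_le.1 hx)]
  · simp

lemma card_support_topTernary {q : ℕ} (hq : q ≤ N) :
    #{i | topTernary x q i ≠ 0} = q := by
  have : univ.filter (topTernary x q · ≠ 0) = univ.filter fun i : Fin N => (i : ℕ) < q := by
    refine filter_congr fun i _ => ?_
    unfold topTernary
    split_ifs <;> simp [*]
  rw [this, Fin.card_filter_val_lt, min_eq_right hq]

noncomputable def absPadded (k : ℕ) : ℝ :=
  if h : k < N then |x ⟨k, h⟩| else 0

lemma absPadded_nonneg (k : ℕ) : 0 ≤ absPadded x k := by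
  unfold absPadded
  split_ifs <;> simp

lemma antitone_absPadded (hsorted : ∀ i j : Fin N, i ≤ j → |x j| ≤ |x i|) :
    Antitone (absPadded x) := by
  intro k l hkl
  by_cases hl : l < N
  · simp only [absPadded, dif_pos hl, dif_pos (hkl.trans_lt hl)]
    exact hsorted _ _ hkl
  · simpa [absPadded, hl] using absPadded_nonneg x k

lemma sum_range_absPadded {q : ℕ} (hq : q ≤ N) :
    ∑ k ∈ range q, absPadded x k = ∑ i : Fin N, if (i : ℕ) < q then |x i| else 0 := by
  rw [sum_fin_eq_sum_range, ← sum_range_add_sum_Ico _ hq, sum_eq_zero (s := Ico q N), add_zero]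
  · refine sum_congr rfl fun k hk => ?_
    have hkq := mem_range.1 hk
    simp [absPadded, hkq, hkq.trans_le hq]
  · intro k hk
    simp [(mem_Ico.1 hk).1]

lemma sum_range_absPadded_sq : ∑ k ∈ range N, absPadded x k ^ 2 = ∑ i, x i ^ 2 := by
  rw [← Fin.sum_univ_eq_sum_range]
  refine sum_congr rfl fun i _ => ?_
  simp [absPadded, sq_abs]

end Ternary

/-- For a sorted unit vector, the sign-pattern top-`q` ternarizations have
cosine `(∑_{i<q} |x i|)/√q`, and some `q` achieves cosine at least `γ_N`.
Here `sign(x i)` is `1` if `x i ≥ 0` and `-1` otherwise. -/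
theorem ternarization_cosine_and_gamma (N : ℕ) (hN : 1 ≤ N) (x : Fin N → ℝ)
    (hsorted : ∀ i j : Fin N, i ≤ j → |x j| ≤ |x i|)
    (hnorm : ∑ i, x i ^ 2 = 1) :
    (∀ q, 1 ≤ q → q ≤ N →
      (∑ i, x i * (if (i : ℕ) < q then (if 0 ≤ x i then (1 : ℝ) else -1) else 0)) /
          Real.sqrt ((Finset.univ.filter fun i : Fin N =>
            (if (i : ℕ) < q then (if 0 ≤ x i then (1 : ℝ) else -1) else 0) ≠ 0).card) =
        (∑ i : Fin N, if (i : ℕ) < q then |x i| else 0) / Real.sqrt q) ∧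
    (∃ q, 1 ≤ q ∧ q ≤ N ∧
      gamma N ≤ (∑ i : Fin N, if (i : ℕ) < q then |x i| else 0) / Real.sqrt q) := by
  refine ⟨fun q _ hq => ?_, ?_⟩
  · change (∑ i, x i * topTernary x q i) / √(#{i | topTernary x q i ≠ 0}) = _
    rw [sum_mul_topTernary, card_support_topTernary x hq]
  obtain ⟨q₀, hq₀, hmax⟩ := exists_max_image (Icc 1 N)
    (fun q => (∑ k ∈ range q, absPadded x k) / √q) ⟨1, by simp [hN]⟩
  obtain ⟨hq₀1, hq₀N⟩ := mem_Icc.1 hq₀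
  refine ⟨q₀, hq₀1, hq₀N, ?_⟩
  rw [← sum_range_absPadded x hq₀N]
  refine gamma_le_of_sum_range_le (antitone_absPadded x hsorted) (absPadded_nonneg x)
    (by rw [sum_range_absPadded_sq, hnorm]) fun q hq => ?_
  rcases Nat.eq_zero_or_pos q with rfl | hq1
  · simp
  · rw [← div_le_iff₀ (by positivity)]
    exact hmax q (mem_Icc.2 ⟨hq1, hq⟩)
end
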